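/- Let (Ω, A, μ) be a probability space and let (E_n)_{n≥1} be a sequence of μ-measurable sets with ∑_{n=1}^∞ μ(E_n) = ∞. Then μ(limsup_{n→∞} E_n) ≥ limsup_{Q→∞} (∑_{s=1}^{Q} μ(E_s))² / (∑_{s,t=1}^{Q} μ(E_s ∩ E_t)). -/

import Mathlib

/-!
By Cauchy–Schwarz for `1_U` and `S = ∑_{s ∈ T} 1_{E s}`, where `U = ⋃_{s ∈ T} E s`, one gets the
Chung–Erdős inequality `(∑_T μ(E s))² ≤ μ(U) · ∑_{s,t ∈ T} μ(E s ∩ E t)`. Apply it to the part of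
`[1, Q]` beyond a fixed `N`: its sum still diverges and differs from the full sum by a bounded
amount, so the `Q`-th ratio is at most `(1 + o(1)) · μ(⋃_{i ≥ N} E i)`. Letting `Q → ∞` and then
`N → ∞` (continuity from above) bounds the limsup by `μ(limsup E)`.
-/

open MeasureTheory Filter Topology ENNReal

theorem ENNReal.sq_lintegral_mul_le {α : Type*} [MeasurableSpace α] (μ : Measure α)
    {f g : α → ℝ≥0∞} (hf : AEMeasurable f μ) (hg : AEMeasurable g μ) :
    (∫⁻ a, f a * g a ∂μ) ^ 2 ≤ (∫⁻ a, f a ^ 2 ∂μ) * ∫⁻ a, g a ^ 2 ∂μ := by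
  have hsq (x : ℝ≥0∞) : (x ^ (1 / 2 : ℝ)) ^ 2 = x := by
    rw [← ENNReal.rpow_natCast, ← ENNReal.rpow_mul]; norm_num
  have h := ENNReal.lintegral_mul_le_Lp_mul_Lq μ Real.HolderConjugate.two_two hf hg
  simp only [Pi.mul_apply, ENNReal.rpow_two] at h
  calc _ ≤ ((∫⁻ a, f a ^ 2 ∂μ) ^ (1 / 2 : ℝ) * (∫⁻ a, g a ^ 2 ∂μ) ^ (1 / 2 : ℝ)) ^ 2 := by
        gcongr
    _ = _ := by rw [mul_pow, hsq, hsq]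

section ChungErdos

variable {Ω ι : Type*} [MeasurableSpace Ω] {μ : Measure Ω} {E : ι → Set Ω}

theorem lintegral_sum_indicator_one (hE : ∀ i, MeasurableSet (E i)) (T : Finset ι) :
    ∫⁻ ω, ∑ s ∈ T, (E s).indicator 1 ω ∂μ = ∑ s ∈ T, μ (E s) := by
  rw [lintegral_finsetSum _ fun s _ => measurable_one.indicator (hE s)]
  exact Finset.sum_congr rfl fun s _ => lintegral_indicator_one (hE s)

theorem sq_sum_measure_le_measure_biUnion_mul_sum_measure_inter
    (hE : ∀ i, MeasurableSet (E i)) (T : Finset ι) :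
    (∑ s ∈ T, μ (E s)) ^ 2 ≤ μ (⋃ s ∈ T, E s) * ∑ s ∈ T, ∑ t ∈ T, μ (E s ∩ E t) := by
  set U := ⋃ s ∈ T, E s
  have hU : MeasurableSet U := .biUnion T.countable_toSet fun s _ => hE s
  set S : Ω → ℝ≥0∞ := fun ω => ∑ s ∈ T, (E s).indicator 1 ω
  have hS : Measurable S := Finset.measurable_sum _ fun s _ => measurable_one.indicator (hE s)
  have hinter (A B : Set Ω) (ω : Ω) :
      (A ∩ B).indicator (1 : Ω → ℝ≥0∞) ω = A.indicator 1 ω * B.indicator 1 ω :=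
    congrFun Set.inter_indicator_one ω
  have hUS (ω : Ω) : U.indicator 1 ω * S ω = S ω := by
    simp only [S, Finset.mul_sum, ← hinter]
    exact Finset.sum_congr rfl fun s hs => by
      rw [Set.inter_eq_right.2 (Finset.subset_set_biUnion_of_mem hs)]
  have hU2 (ω : Ω) : U.indicator (1 : Ω → ℝ≥0∞) ω ^ 2 = U.indicator 1 ω := by
    rw [sq, ← hinter, Set.inter_self]
  have hS2 (ω : Ω) : S ω ^ 2 = ∑ s ∈ T, ∑ t ∈ T, (E s ∩ E t).indicator 1 ω := by
    simp only [S, sq, Finset.sum_mul_sum, hinter]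
  have hS2_lintegral : ∫⁻ ω, S ω ^ 2 ∂μ = ∑ s ∈ T, ∑ t ∈ T, μ (E s ∩ E t) := by
    simp only [hS2]
    rw [lintegral_finsetSum _ fun s _ => Finset.measurable_sum _ fun t _ =>
      measurable_one.indicator ((hE s).inter (hE t))]
    exact Finset.sum_congr rfl fun s _ =>
      lintegral_sum_indicator_one (fun t => (hE s).inter (hE t)) T
  have h := ENNReal.sq_lintegral_mul_le μ (measurable_one.indicator hU).aemeasurable
    hS.aemeasurable
  rwa [lintegral_congr hUS, lintegral_congr hU2, hS2_lintegral, lintegral_indicator_one hU,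
    lintegral_sum_indicator_one hE] at h

end ChungErdos

section Tail

variable {Ω : Type*} [MeasurableSpace Ω] {μ : Measure Ω} [IsFiniteMeasure μ]

theorem sq_sum_measure_div_le_of_subset {ι : Type*} {E : ι → Set Ω}
    (hE : ∀ i, MeasurableSet (E i)) {T T' : Finset ι} (hT' : T' ⊆ T)
    (h0 : ∑ s ∈ T', μ (E s) ≠ 0) :
    (∑ s ∈ T, μ (E s)) ^ 2 / ∑ s ∈ T, ∑ t ∈ T, μ (E s ∩ E t) ≤
      ((∑ s ∈ T, μ (E s)) / ∑ s ∈ T', μ (E s)) ^ 2 * μ (⋃ s ∈ T', E s) := by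
  set a := ∑ s ∈ T, μ (E s)
  set A := ∑ s ∈ T', μ (E s)
  set D := ∑ s ∈ T', ∑ t ∈ T', μ (E s ∩ E t)
  have hA : A ≠ ∞ := ENNReal.sum_ne_top.2 fun _ _ => measure_ne_top μ _
  have hD : D ≤ ∑ s ∈ T, ∑ t ∈ T, μ (E s ∩ E t) :=
    calc D ≤ ∑ s ∈ T', ∑ t ∈ T, μ (E s ∩ E t) :=
          Finset.sum_le_sum fun s _ => Finset.sum_le_sum_of_subset hT'
      _ ≤ _ := Finset.sum_le_sum_of_subset hT'
  calc a ^ 2 / ∑ s ∈ T, ∑ t ∈ T, μ (E s ∩ E t)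
      ≤ (a / A * A) ^ 2 / D := by rw [ENNReal.div_mul_cancel h0 hA]; gcongr
    _ = (a / A) ^ 2 * (A ^ 2 / D) := by rw [mul_pow, mul_div_assoc]
    _ ≤ (a / A) ^ 2 * μ (⋃ s ∈ T', E s) := by
      gcongr
      exact ENNReal.div_le_of_le_mul
        (sq_sum_measure_le_measure_biUnion_mul_sum_measure_inter hE T')

theorem limsup_sq_sum_measure_div_le_measure_iUnion_ge {α : Type*} {l : Filter α} [l.NeBot]
    {E : ℕ → Set Ω} (hE : ∀ i, MeasurableSet (E i)) {T : α → Finset ℕ}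
    (hT : Tendsto (fun Q => ∑ s ∈ T Q, μ (E s)) l (𝓝 ∞)) (N : ℕ) :
    limsup (fun Q => (∑ s ∈ T Q, μ (E s)) ^ 2 / ∑ s ∈ T Q, ∑ t ∈ T Q, μ (E s ∩ E t)) l ≤
      μ (⋃ i ≥ N, E i) := by
  set C := ∑ s ∈ Finset.range N, μ (E s)
  set A := fun Q => ∑ s ∈ (T Q).filter (N ≤ ·), μ (E s)
  have hC : C ≠ ∞ := ENNReal.sum_ne_top.2 fun _ _ => measure_ne_top μ _
  have hsplit (Q : α) : ∑ s ∈ T Q, μ (E s) ≤ C + A Q := by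
    rw [← Finset.sum_filter_add_sum_filter_not (T Q) (N ≤ ·), add_comm]
    gcongr
    exact Finset.sum_le_sum_of_subset fun s hs =>
      Finset.mem_range.2 (not_le.1 (Finset.mem_filter.1 hs).2)
  have hA : Tendsto A l (𝓝 ∞) := by
    have := ENNReal.Tendsto.sub (tendsto_nhds_top_mono hT (.of_forall hsplit))
      tendsto_const_nhds (Or.inr hC)
    simpa [ENNReal.add_sub_cancel_left hC, hC] using this
  have hbound : ∀ᶠ Q in l, (∑ s ∈ T Q, μ (E s)) ^ 2 / ∑ s ∈ T Q, ∑ t ∈ T Q, μ (E s ∩ E t) ≤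
      (C / A Q + 1) ^ 2 * μ (⋃ i ≥ N, E i) := by
    filter_upwards [hA.eventually_ne ENNReal.top_ne_zero] with Q hA0
    have hAtop : A Q ≠ ∞ := ENNReal.sum_ne_top.2 fun _ _ => measure_ne_top μ _
    refine (sq_sum_measure_div_le_of_subset hE (Finset.filter_subset _ _) hA0).trans ?_
    gcongr ?_ ^ 2 * μ ?_
    · calc (∑ s ∈ T Q, μ (E s)) / A Q ≤ (C + A Q) / A Q := by gcongr; exact hsplit Q
        _ = C / A Q + 1 := by rw [ENNReal.add_div, ENNReal.div_self hA0 hAtop]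
    · exact Set.iUnion₂_mono' fun s hs => ⟨s, (Finset.mem_filter.1 hs).2, subset_rfl⟩
  have hlim : Tendsto (fun Q => (C / A Q + 1) ^ 2 * μ (⋃ i ≥ N, E i)) l
      (𝓝 (μ (⋃ i ≥ N, E i))) := by
    have := ENNReal.Tendsto.pow (n := 2) ((ENNReal.Tendsto.const_div hA (Or.inr hC)).add_const 1)
    simpa using ENNReal.Tendsto.mul_const this (Or.inr (measure_ne_top μ _))
  exact (limsup_le_limsup hbound).trans hlim.limsup_eq.le

end Tail

theorem measure_limsup_atTop_eq_iInf_measure_iUnion_ge {Ω : Type*} [MeasurableSpace Ω]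
    {μ : Measure Ω} [IsFiniteMeasure μ] {E : ℕ → Set Ω} (hE : ∀ i, MeasurableSet (E i)) :
    μ (limsup E atTop) = ⨅ N, μ (⋃ i ≥ N, E i) := by
  rw [limsup_eq_iInf_iSup_of_nat]
  exact Antitone.measure_iInter
    (fun _ _ h => Set.biUnion_mono (fun _ hi => h.trans hi) fun _ _ => subset_rfl)
    (fun _ => (MeasurableSet.biUnion (Set.to_countable _) fun i _ => hE i).nullMeasurableSet)
    ⟨0, measure_ne_top μ _⟩

theorem measure_limsup_ge_limsup_ratio
    {Ω : Type*} [MeasurableSpace Ω] (μ : Measure Ω) [IsProbabilityMeasure μ]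
    (E : ℕ → Set Ω) (hE : ∀ i, MeasurableSet (E i))
    (hdiv : ∑' i : ℕ, μ (E (i + 1)) = ⊤) :
    Filter.limsup (fun Q : ℕ =>
        (∑ s ∈ Finset.Icc 1 Q, μ (E s)) ^ 2 /
          ∑ s ∈ Finset.Icc 1 Q, ∑ t ∈ Finset.Icc 1 Q, μ (E s ∩ E t))
      Filter.atTop ≤ μ (Filter.limsup E Filter.atTop) := by
  have hT : Tendsto (fun Q => ∑ s ∈ Finset.Icc 1 Q, μ (E s)) atTop (𝓝 ∞) := by
    have h := ENNReal.tendsto_nat_tsum fun i => μ (E (i + 1))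
    simpa only [hdiv, Finset.range_eq_Ico, Finset.sum_Ico_add' (fun s => μ (E s)), zero_add,
      Finset.Ico_add_one_right_eq_Icc] using h
  rw [measure_limsup_atTop_eq_iInf_measure_iUnion_ge hE]
  exact le_iInf (limsup_sq_sum_measure_div_le_measure_iUnion_ge hE hT)
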